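/- arXiv:2212.09507 — 8 statements merged into one kernel-verified Lean document; each statement's English description precedes it below -/
import Mathlib

section
/- For every q ≥ 2, there exists a bijection F from the set of q-element subsets of {1,...,2q-1} to the set of (q-1)-element subsets of {1,...,2q-1} such that F(A) ⊆ A for every q-element subset A. -/
theorem stmt_0 (q : ℕ) (hq : 2 ≤ q) :
    ∃ F : {A : Finset (Fin (2 * q - 1)) // A.card = q} →
          {A : Finset (Fin (2 * q - 1)) // A.card = q - 1},
      Function.Bijective F ∧ ∀ A, (F A).1 ⊆ A.1 := by
  classical
  let t : {A : Finset (Fin (2 * q - 1)) // A.card = q} →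
      Finset {A : Finset (Fin (2 * q - 1)) // A.card = q - 1} :=
    fun A => Finset.univ.filter (fun B => B.1 ⊆ A.1)
  have hall : ∀ s : Finset {A : Finset (Fin (2 * q - 1)) // A.card = q},
      s.card ≤ (s.biUnion t).card := by
    intro s
    have key : s.card * q ≤ (s.biUnion t).card * q := by
      apply Finset.card_mul_le_card_mul (fun A B => B.1 ⊆ A.1)
      · intro A hA
        -- the set of B in the biUnion with B ⊆ A is exactly powersetCard (q-1) of A
        have himg : Finset.image Subtype.val
            ((s.biUnion t).bipartiteAbove (fun A B => B.1 ⊆ A.1) A) =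
              A.1.powersetCard (q - 1) := by
          ext C
          simp only [Finset.mem_image, Finset.mem_bipartiteAbove, Finset.mem_biUnion,
            Finset.mem_powersetCard]
          constructor
          · rintro ⟨B, ⟨-, hBA⟩, rfl⟩
            exact ⟨hBA, B.2⟩
          · rintro ⟨hCA, hC⟩
            exact ⟨⟨C, hC⟩, ⟨⟨A, hA, by simp [t, hCA]⟩, hCA⟩, rfl⟩
        have h2 : ((s.biUnion t).bipartiteAbove (fun A B => B.1 ⊆ A.1) A).card
            = (A.1.powersetCard (q - 1)).card := by
          rw [← himg, Finset.card_image_of_injective _ Subtype.val_injective]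
        rw [h2, Finset.card_powersetCard, A.2]
        have hc : q.choose (q - 1) = q := by
          rw [← Nat.choose_symm (show q - 1 ≤ q by omega), show q - (q-1) = 1 by omega,
            Nat.choose_one_right]
        exact hc.ge
      · intro B hB
        -- the sets A ∈ s with B ⊆ A inject into 1-element subsets of B.1ᶜ
        have : (s.bipartiteBelow (fun A B => B.1 ⊆ A.1) B).card ≤
            ((B.1ᶜ).powersetCard 1).card := by
          apply Finset.card_le_card_of_injOn (fun A => A.1 \ B.1)
          · intro A hA
            simp only [Finset.mem_coe, Finset.mem_bipartiteBelow] at hA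
            simp only [Finset.mem_coe, Finset.mem_powersetCard]
            constructor
            · intro x hx
              simp only [Finset.mem_sdiff] at hx
              simpa using hx.2
            · rw [Finset.card_sdiff_of_subset hA.2, A.2, B.2]
              omega
          · intro A1 h1 A2 h2 hEq
            simp only [Finset.mem_coe, Finset.mem_bipartiteBelow] at h1 h2
            apply Subtype.ext
            rw [← Finset.sdiff_union_of_subset h1.2, ← Finset.sdiff_union_of_subset h2.2]
            exact congrArg (· ∪ B.1) hEq
        rw [Finset.card_powersetCard, Nat.choose_one_right, Finset.card_compl,
          Fintype.card_fin, B.2] at this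
        exact this.trans (by omega)
    exact Nat.le_of_mul_le_mul_right key (by omega)
  obtain ⟨f, hf, hft⟩ := (Finset.all_card_le_biUnion_card_iff_exists_injective t).mp hall
  have hcard : Fintype.card {A : Finset (Fin (2 * q - 1)) // A.card = q}
      = Fintype.card {A : Finset (Fin (2 * q - 1)) // A.card = q - 1} := by
    rw [Fintype.card_finset_len, Fintype.card_finset_len, Fintype.card_fin]
    have h1 : q - 1 = (2 * q - 1) - q := by omega
    rw [h1, Nat.choose_symm (by omega)]
  refine ⟨f, (Fintype.bijective_iff_injective_and_card f).mpr ⟨hf, hcard⟩, fun A => ?_⟩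
  have := hft A
  simpa [t] using this
end

section
/- For every m ∈ ℕ and every q ∈ {1,...,m}, there exists a map F : S(q,m) → S(q-1,m) with F(A) ⊆ A for all A ∈ S(q,m), such that F is surjective whenever C(m,q) ≥ C(m,q-1), and F is injective whenever C(m,q) ≤ C(m,q-1). -/
open Finset

section Aux

variable {m q : ℕ}

/-- The number of `q`-sets containing a fixed `(q-1)`-set `B`, within any collection,
is at most `m - q + 1`. Stated abstractly: a filter of sets `A` with `B ⊆ A`, `#A = q`. -/
lemma aux_above_bound (hq1 : 1 ≤ q) (hqm : q ≤ m)
    (B : Finset (Fin m)) (hB : B.card = q - 1)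
    (s : Finset (Finset (Fin m))) (hs : ∀ A ∈ s, B ⊆ A ∧ A.card = q) :
    s.card ≤ m - q + 1 := by
  classical
  have h1 : s.card ≤ (Bᶜ.powersetCard 1).card := by
    apply Finset.card_le_card_of_injOn (fun A => A \ B)
    · intro A hA
      obtain ⟨hBA, hAq⟩ := hs A hA
      rw [Finset.mem_coe, Finset.mem_powersetCard]
      constructor
      · intro x hx
        simp only [Finset.mem_sdiff] at hx
        simp [hx.2]
      · rw [Finset.card_sdiff_of_subset hBA, hAq, hB]
        omega
    · intro A1 h1 A2 h2 he
      obtain ⟨hBA1, _⟩ := hs A1 (by simpa using h1)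
      obtain ⟨hBA2, _⟩ := hs A2 (by simpa using h2)
      have he' : A1 \ B = A2 \ B := he
      have : A1 \ B ∪ B = A2 \ B ∪ B := by rw [he']
      rwa [Finset.sdiff_union_of_subset hBA1, Finset.sdiff_union_of_subset hBA2] at this
  rw [Finset.card_powersetCard, Finset.card_compl, hB, Fintype.card_fin,
    Nat.choose_one_right] at h1
  omega

/-- There are at least `m - q + 1` many `q`-supersets of a fixed `(q-1)`-set. -/
lemma aux_above_lb (hq1 : 1 ≤ q) (hqm : q ≤ m)
    (B : Finset (Fin m)) (hB : B.card = q - 1) :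
    m - q + 1 ≤ ((Finset.univ.powersetCard q).filter (B ⊆ ·)).card := by
  classical
  have h1 : (Bᶜ.image (fun x => insert x B)).card
      ≤ ((Finset.univ.powersetCard q).filter (B ⊆ ·)).card := by
    apply Finset.card_le_card
    intro A hA
    simp only [Finset.mem_image, Finset.mem_compl] at hA
    obtain ⟨x, hx, rfl⟩ := hA
    simp only [Finset.mem_filter, Finset.mem_powersetCard]
    refine ⟨⟨Finset.subset_univ _, ?_⟩, Finset.subset_insert _ _⟩
    rw [Finset.card_insert_of_notMem hx, hB]
    omega
  have h2 : (Bᶜ.image (fun x => insert x B)).card = Bᶜ.card := by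
    apply Finset.card_image_of_injOn
    intro x hx y hy he
    simp only [Finset.coe_compl, Set.mem_compl_iff, Finset.mem_coe] at hx hy
    have he' : insert x B = insert y B := he
    have : x ∈ insert y B := he' ▸ Finset.mem_insert_self x B
    rcases Finset.mem_insert.mp this with h | h
    · exact h
    · exact absurd h hx
  rw [h2, Finset.card_compl, hB, Fintype.card_fin] at h1
  have : m - (q - 1) = m - q + 1 := by omega
  omega

lemma aux_choose_pred (hq1 : 1 ≤ q) : q.choose (q - 1) = q := by
  have : q - 1 = q - 1 := rfl
  have h := Nat.choose_symm (show 1 ≤ q from hq1)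
  rw [h, Nat.choose_one_right]

lemma aux_identity (hq1 : 1 ≤ q) (hqm : q ≤ m) :
    Nat.choose m q * q = Nat.choose m (q - 1) * (m - q + 1) := by
  have h := Nat.choose_succ_right_eq m (q - 1)
  have hq : q - 1 + 1 = q := by omega
  rw [hq] at h
  rw [h]
  congr 1
  omega

end Aux

theorem stmt_1 (m q : ℕ) (hq1 : 1 ≤ q) (hqm : q ≤ m) :
    ∃ F : {A : Finset (Fin m) // A.card = q} → {A : Finset (Fin m) // A.card = q - 1},
      (∀ A, (F A).1 ⊆ A.1) ∧
      (Nat.choose m (q - 1) ≤ Nat.choose m q → Function.Surjective F) ∧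
      (Nat.choose m q ≤ Nat.choose m (q - 1) → Function.Injective F) := by
  classical
  have hiden := aux_identity hq1 hqm
  have hchoose_pos : 0 < Nat.choose m q := Nat.choose_pos hqm
  have hchoose_pos' : 0 < Nat.choose m (q - 1) := Nat.choose_pos (by omega)
  by_cases hcase : Nat.choose m q ≤ Nat.choose m (q - 1)
  · -- build an injective F via Hall
    have hq' : m - q + 1 ≤ q := by nlinarith
    set ι := {A : Finset (Fin m) // A.card = q}
    set κ := {A : Finset (Fin m) // A.card = q - 1}
    set t : ι → Finset (Finset (Fin m)) := fun A => A.1.powersetCard (q - 1) with ht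
    have hall : ∀ s : Finset ι, s.card ≤ (s.biUnion t).card := by
      intro s
      set T := s.biUnion t with hT
      have hdc : s.card * q ≤ T.card * (m - q + 1) := by
        apply Finset.card_mul_le_card_mul (fun A B => B ∈ t A)
        · intro A hA
          have hsub : t A ⊆ T.bipartiteAbove (fun A B => B ∈ t A) A := by
            intro B hB
            rw [Finset.mem_bipartiteAbove]
            exact ⟨Finset.mem_biUnion.mpr ⟨A, hA, hB⟩, hB⟩
          calc q = (t A).card := by
                  rw [ht]; simp only [Finset.card_powersetCard, A.2]
                  exact (aux_choose_pred hq1).symm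
            _ ≤ _ := Finset.card_le_card hsub
        · intro B hB
          rw [Finset.mem_biUnion] at hB
          obtain ⟨A0, _, hBA0⟩ := hB
          rw [ht, Finset.mem_powersetCard] at hBA0
          rw [Finset.bipartiteBelow]
          have h1 : ((s.filter (fun A => B ∈ t A)).image Subtype.val).card
              ≤ m - q + 1 := by
            apply aux_above_bound hq1 hqm B hBA0.2
            intro A hA
            simp only [Finset.mem_image, Finset.mem_filter] at hA
            obtain ⟨A', ⟨_, hA'⟩, rfl⟩ := hA
            rw [ht, Finset.mem_powersetCard] at hA'
            exact ⟨hA'.1, A'.2⟩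
          rwa [Finset.card_image_of_injective _ Subtype.val_injective] at h1
      have h2 : s.card * q ≤ T.card * q :=
        le_trans hdc (Nat.mul_le_mul_left _ hq')
      exact Nat.le_of_mul_le_mul_right h2 (by omega)
    obtain ⟨f, hfinj, hf⟩ := (Finset.all_card_le_biUnion_card_iff_exists_injective t).mp hall
    have hfcard : ∀ A : ι, (f A).card = q - 1 := fun A =>
      (Finset.mem_powersetCard.mp (hf A)).2
    have hfsub : ∀ A : ι, f A ⊆ A.1 := fun A =>
      (Finset.mem_powersetCard.mp (hf A)).1
    refine ⟨fun A => ⟨f A, hfcard A⟩, fun A => hfsub A, ?_, ?_⟩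
    · -- surjectivity under the equality condition
      intro hsur
      have hinj : Function.Injective (fun A : ι => (⟨f A, hfcard A⟩ : κ)) := by
        intro A1 A2 h
        exact hfinj (congrArg Subtype.val h)
      have hcard : Fintype.card ι = Fintype.card κ := by
        rw [Fintype.card_finset_len, Fintype.card_finset_len, Fintype.card_fin]
        omega
      exact ((Fintype.bijective_iff_injective_and_card _).mpr ⟨hinj, hcard⟩).2
    · intro _ A1 A2 h
      exact hfinj (congrArg Subtype.val h)
  · -- build a surjective F via Hall in the other direction
    push_neg at hcase
    have hq' : q ≤ m - q + 1 := by nlinarith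
    set ι := {A : Finset (Fin m) // A.card = q}
    set κ := {A : Finset (Fin m) // A.card = q - 1}
    set t : κ → Finset (Finset (Fin m)) :=
      fun B => (Finset.univ.powersetCard q).filter (B.1 ⊆ ·) with ht
    have hall : ∀ s : Finset κ, s.card ≤ (s.biUnion t).card := by
      intro s
      set T := s.biUnion t with hT
      have hdc : s.card * (m - q + 1) ≤ T.card * q := by
        apply Finset.card_mul_le_card_mul (fun B A => A ∈ t B)
        · intro B hB
          have hsub : t B ⊆ T.bipartiteAbove (fun B A => A ∈ t B) B := by
            intro A hA
            rw [Finset.mem_bipartiteAbove]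
            exact ⟨Finset.mem_biUnion.mpr ⟨B, hB, hA⟩, hA⟩
          calc m - q + 1 ≤ (t B).card := aux_above_lb hq1 hqm B.1 B.2
            _ ≤ _ := Finset.card_le_card hsub
        · intro A hA
          rw [Finset.mem_biUnion] at hA
          obtain ⟨B0, _, hAB0⟩ := hA
          rw [ht] at hAB0
          simp only [Finset.mem_filter, Finset.mem_powersetCard] at hAB0
          have hAq : A.card = q := hAB0.1.2
          rw [Finset.bipartiteBelow]
          have h1 : (s.filter (fun B => A ∈ t B)).card
              ≤ (A.powersetCard (q - 1)).card := by
            apply Finset.card_le_card_of_injOn (fun B => B.1)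
            · intro B hB
              simp only [Finset.mem_coe, Finset.mem_filter] at hB
              rw [ht] at hB
              simp only [Finset.mem_filter, Finset.mem_powersetCard] at hB
              rw [Finset.mem_coe, Finset.mem_powersetCard]
              exact ⟨hB.2.2, B.2⟩
            · intro B1 _ B2 _ h
              exact Subtype.ext h
          rw [Finset.card_powersetCard, hAq, aux_choose_pred hq1] at h1
          exact h1
      have h2 : s.card * (m - q + 1) ≤ T.card * (m - q + 1) :=
        le_trans hdc (Nat.mul_le_mul_left _ hq')
      exact Nat.le_of_mul_le_mul_right h2 (by omega)
    obtain ⟨g, hginj, hg⟩ := (Finset.all_card_le_biUnion_card_iff_exists_injective t).mp hall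
    have hgcard : ∀ B : κ, (g B).card = q := fun B => by
      have := hg B
      rw [ht] at this
      simp only [Finset.mem_filter, Finset.mem_powersetCard] at this
      exact this.1.2
    have hgsub : ∀ B : κ, B.1 ⊆ g B := fun B => by
      have := hg B
      rw [ht] at this
      simp only [Finset.mem_filter, Finset.mem_powersetCard] at this
      exact this.2
    set G : κ → ι := fun B => ⟨g B, hgcard B⟩ with hG
    have hGinj : Function.Injective G := by
      intro B1 B2 h
      exact hginj (congrArg Subtype.val h)
    have hdef : ∀ A : ι, ∃ C, C ⊆ A.1 ∧ C.card = q - 1 := by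
      intro A
      obtain ⟨C, hC1, hC2⟩ := Finset.exists_subset_card_eq
        (show q - 1 ≤ A.1.card by rw [A.2]; omega)
      exact ⟨C, hC1, hC2⟩
    set F : ι → κ := fun A =>
      if h : ∃ B, G B = A then h.choose
      else ⟨(hdef A).choose, (hdef A).choose_spec.2⟩ with hF
    have hFsub : ∀ A, (F A).1 ⊆ A.1 := by
      intro A
      rw [hF]
      by_cases h : ∃ B, G B = A
      · simp only [dif_pos h]
        have hspec := h.choose_spec
        have h2 : g h.choose = A.1 := congrArg Subtype.val hspec
        rw [← h2]
        exact hgsub h.choose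
      · simp only [dif_neg h]
        exact (hdef A).choose_spec.1
    refine ⟨F, hFsub, ?_, ?_⟩
    · intro _
      intro B
      refine ⟨G B, ?_⟩
      have h : ∃ B', G B' = G B := ⟨B, rfl⟩
      rw [hF]
      simp only [dif_pos h]
      exact hGinj h.choose_spec
    · intro hinj
      exact absurd hinj (by omega)
end

section
/- For every m ∈ ℕ there exists a complete set of orders on [m] containing at most C(m, ⌊m/2⌋) elements. -/
open Finset

/-- Hall matching downward: for levels `k` with `m + 1 ≤ 2k`, there is a map sending each
`k`-set to a `(k-1)`-subset, injectively on the level. -/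
lemma hall_down (m k : ℕ) (hk1 : m + 1 ≤ 2 * k) :
    ∃ f : Finset (Fin m) → Finset (Fin m),
      (∀ A : Finset (Fin m), A.card = k → f A ⊆ A ∧ (f A).card = k - 1) ∧
      (∀ A B : Finset (Fin m), A.card = k → B.card = k → f A = f B → A = B) := by
  classical
  have hk0 : 0 < k := by omega
  set t : {A : Finset (Fin m) // A.card = k} → Finset (Finset (Fin m)) :=
    fun A => A.1.powersetCard (k - 1) with ht
  have hall : ∀ S : Finset {A : Finset (Fin m) // A.card = k},
      S.card ≤ (S.biUnion t).card := by
    intro S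
    set S' : Finset (Finset (Fin m)) := S.image Subtype.val with hS'
    have hcard : S'.card = S.card := Finset.card_image_of_injective _ Subtype.val_injective
    have hsized : (S' : Set (Finset (Fin m))).Sized k := by
      intro A hA
      simp only [hS', Finset.coe_image, Set.mem_image, Finset.mem_coe] at hA
      obtain ⟨a, _, rfl⟩ := hA
      exact a.2
    have hbu : S.biUnion t = Finset.shadow S' := by
      ext B
      rw [Finset.mem_biUnion, Finset.mem_shadow_iff_exists_mem_card_add_one]
      constructor
      · rintro ⟨a, haS, hB⟩
        rw [ht, Finset.mem_powersetCard] at hB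
        refine ⟨a.1, ?_, hB.1, ?_⟩
        · exact Finset.mem_image_of_mem _ haS
        · rw [a.2, hB.2]; omega
      · rintro ⟨s, hs, hBs, hcard⟩
        rw [hS', Finset.mem_image] at hs
        obtain ⟨a, haS, rfl⟩ := hs
        refine ⟨a, haS, ?_⟩
        rw [ht, Finset.mem_powersetCard]
        exact ⟨hBs, by have := a.2; omega⟩
    have hlym := Finset.card_mul_le_card_shadow_mul hsized
    rw [Fintype.card_fin] at hlym
    have h2 : (Finset.shadow S').card * (m - k + 1) ≤ (Finset.shadow S').card * k :=
      Nat.mul_le_mul_left _ (by omega)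
    have h3 : S'.card * k ≤ (Finset.shadow S').card * k := le_trans hlym h2
    have h4 : S'.card ≤ (Finset.shadow S').card := Nat.le_of_mul_le_mul_right h3 hk0
    rw [hbu]; omega
  obtain ⟨f₀, hf₀inj, hf₀mem⟩ :=
    (Finset.all_card_le_biUnion_card_iff_exists_injective t).mp hall
  refine ⟨fun A => if hA : A.card = k then f₀ ⟨A, hA⟩ else ∅, ?_, ?_⟩
  · intro A hA
    simp only [dif_pos hA]
    have := hf₀mem ⟨A, hA⟩
    rw [ht, Finset.mem_powersetCard] at this
    exact this
  · intro A B hA hB heq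
    simp only [dif_pos hA, dif_pos hB] at heq
    have := hf₀inj heq
    exact congrArg Subtype.val this

/-- Existence of a representative map whose fibers are chains: every subset is mapped to a
subset of size `m/2`, and two subsets with the same representative are comparable. -/
lemma exists_rep (m : ℕ) :
    ∃ r : Finset (Fin m) → Finset (Fin m),
      (∀ A, (r A).card = m / 2) ∧ (∀ A B, r A = r B → A ⊆ B ∨ B ⊆ A) := by
  classical
  set h := m / 2 with hh
  have H : ∀ k : ℕ, ∃ f : Finset (Fin m) → Finset (Fin m),
      m + 1 ≤ 2 * k →
        ((∀ A, A.card = k → f A ⊆ A ∧ (f A).card = k - 1) ∧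
         (∀ A B, A.card = k → B.card = k → f A = f B → A = B)) := by
    intro k
    by_cases hk : m + 1 ≤ 2 * k
    · obtain ⟨f, hf⟩ := hall_down m k hk
      exact ⟨f, fun _ => hf⟩
    · exact ⟨fun _ => ∅, fun hk' => absurd hk' hk⟩
  choose F hF using H
  set s : Finset (Fin m) → Finset (Fin m) := fun A =>
    if h < A.card then F A.card A
    else if A.card < h then (F (m - A.card) Aᶜ)ᶜ
    else A with hs
  have card_le : ∀ A : Finset (Fin m), A.card ≤ m := by
    intro A
    simpa using A.card_le_univ
  have s_gt : ∀ A, h < A.card → s A ⊆ A ∧ (s A).card = A.card - 1 := by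
    intro A hA
    have hcond : m + 1 ≤ 2 * A.card := by omega
    simp only [hs, if_pos hA]
    exact (hF A.card hcond).1 A rfl
  have s_lt : ∀ A, A.card < h → A ⊆ s A ∧ (s A).card = A.card + 1 := by
    intro A hA
    have hcc : Aᶜ.card = m - A.card := by
      rw [Finset.card_compl, Fintype.card_fin]
    have hcond : m + 1 ≤ 2 * (m - A.card) := by omega
    have h1 := (hF (m - A.card) hcond).1 Aᶜ hcc
    have hnot : ¬ h < A.card := by omega
    simp only [hs, if_neg hnot, if_pos hA]
    constructor
    · have := Finset.compl_subset_compl.mpr h1.1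
      rwa [compl_compl] at this
    · rw [Finset.card_compl, Fintype.card_fin, h1.2]
      omega
  have s_eq : ∀ A, A.card = h → s A = A := by
    intro A hA
    simp only [hs, hA, lt_irrefl, if_neg, if_false]
  have s_inj_gt : ∀ A B, h < A.card → A.card = B.card → s A = s B → A = B := by
    intro A B hA hcard heq
    have hcond : m + 1 ≤ 2 * A.card := by omega
    have hB : h < B.card := by omega
    simp only [hs, if_pos hA, if_pos hB] at heq
    rw [← hcard] at heq
    exact (hF A.card hcond).2 A B rfl hcard.symm heq
  have s_inj_lt : ∀ A B, A.card < h → A.card = B.card → s A = s B → A = B := by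
    intro A B hA hcard heq
    have hcond : m + 1 ≤ 2 * (m - A.card) := by omega
    have hB : A.card < h → B.card < h := by omega
    have hnotA : ¬ h < A.card := by omega
    have hnotB : ¬ h < B.card := by omega
    simp only [hs, if_neg hnotA, if_neg hnotB, if_pos hA, if_pos (hB hA)] at heq
    rw [← hcard] at heq
    have heq2 : F (m - A.card) Aᶜ = F (m - A.card) Bᶜ := compl_injective heq
    have hccA : Aᶜ.card = m - A.card := by rw [Finset.card_compl, Fintype.card_fin]
    have hccB : Bᶜ.card = m - A.card := by rw [Finset.card_compl, Fintype.card_fin, hcard]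
    have := (hF (m - A.card) hcond).2 Aᶜ Bᶜ hccA hccB heq2
    exact compl_injective this
  -- card of iterates reaching the middle level
  have card_iter : ∀ j A, A.card ≤ h + j → h ≤ A.card + j → (s^[j] A).card = h := by
    intro j
    induction j with
    | zero => intro A h1 h2; simp only [Function.iterate_zero, id]; omega
    | succ j ih =>
      intro A h1 h2
      rw [Function.iterate_succ_apply]
      rcases lt_trichotomy A.card h with hlt | heq | hgt
      · have h3 := (s_lt A hlt).2
        exact ih _ (by omega) (by omega)
      · rw [s_eq A heq]; exact ih A (by omega) (by omega)
      · have h3 := (s_gt A hgt).2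
        exact ih _ (by omega) (by omega)
  have sub_iter : ∀ j A, A.card ≤ h → A ⊆ s^[j] A := by
    intro j
    induction j with
    | zero => intro A _; simp
    | succ j ih =>
      intro A hA
      rw [Function.iterate_succ_apply]
      rcases eq_or_lt_of_le hA with heq | hlt
      · rw [s_eq A heq]; exact ih A hA
      · have h1 := s_lt A hlt
        exact h1.1.trans (ih _ (by have := h1.2; omega))
  have sup_iter : ∀ j A, h ≤ A.card → s^[j] A ⊆ A := by
    intro j
    induction j with
    | zero => intro A _; simp
    | succ j ih =>
      intro A hA
      rw [Function.iterate_succ_apply]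
      rcases eq_or_lt_of_le hA with heq | hlt
      · rw [s_eq A heq.symm]; exact ih A hA
      · have h1 := s_gt A hlt
        exact (ih _ (by have := h1.2; omega)).trans h1.1
  have inj_iter_ge : ∀ j A B, h ≤ A.card → A.card = B.card → s^[j] A = s^[j] B → A = B := by
    intro j
    induction j with
    | zero => intro A B _ _ heq; simpa using heq
    | succ j ih =>
      intro A B hA hcard heq
      rw [Function.iterate_succ_apply, Function.iterate_succ_apply] at heq
      rcases eq_or_lt_of_le hA with hEq | hgt
      · rw [s_eq A hEq.symm, s_eq B (by omega)] at heq
        exact ih A B hA hcard heq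
      · have h1 := (s_gt A hgt).2
        have h2 := (s_gt B (by omega)).2
        have := ih (s A) (s B) (by omega) (by omega) heq
        exact s_inj_gt A B hgt hcard this
  have inj_iter_le : ∀ j A B, A.card ≤ h → A.card = B.card → s^[j] A = s^[j] B → A = B := by
    intro j
    induction j with
    | zero => intro A B _ _ heq; simpa using heq
    | succ j ih =>
      intro A B hA hcard heq
      rw [Function.iterate_succ_apply, Function.iterate_succ_apply] at heq
      rcases eq_or_lt_of_le hA with hEq | hlt
      · rw [s_eq A hEq, s_eq B (by omega)] at heq
        exact ih A B hA hcard heq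
      · have h1 := (s_lt A hlt).2
        have h2 := (s_lt B (by omega)).2
        have := ih (s A) (s B) (by omega) (by omega) heq
        exact s_inj_lt A B hlt hcard this
  have card_iter_gt : ∀ j A, h + j ≤ A.card → (s^[j] A).card = A.card - j := by
    intro j
    induction j with
    | zero => intro A _; simp
    | succ j ih =>
      intro A hA
      have hgt : h < A.card := by omega
      have h1 := (s_gt A hgt).2
      rw [Function.iterate_succ_apply, ih _ (by omega)]
      omega
  have card_iter_lt : ∀ j A, A.card + j ≤ h → (s^[j] A).card = A.card + j := by
    intro j
    induction j with
    | zero => intro A _; simp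
    | succ j ih =>
      intro A hA
      have hlt : A.card < h := by omega
      have h1 := (s_lt A hlt).2
      rw [Function.iterate_succ_apply, ih _ (by omega)]
      omega
  have fix : ∀ j A, A.card = h → s^[j] A = A := by
    intro j
    induction j with
    | zero => intro A _; simp
    | succ j ih =>
      intro A hA
      rw [Function.iterate_succ_apply, s_eq A hA]
      exact ih A hA
  -- key comparability lemmas
  have key_ge : ∀ A B : Finset (Fin m), h ≤ A.card → h ≤ B.card → A.card ≤ B.card →
      s^[m] A = s^[m] B → A ⊆ B := by
    intro A B hA hB hAB hr
    set d := B.card - A.card with hd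
    have hdm : d ≤ m := by have := card_le B; omega
    have h1 : (s^[m - d] A).card = h :=
      card_iter (m - d) A (by have := card_le A; have := card_le B; omega) (by omega)
    have h2 : s^[m] A = s^[m - d] A := by
      have hiter := Function.iterate_add_apply s d (m - d) A
      rw [show d + (m - d) = m by omega] at hiter
      rw [hiter, fix d _ h1]
    have h3 : (s^[d] B).card = A.card := by
      rw [card_iter_gt d B (by omega)]; omega
    have h4 : s^[m] B = s^[m - d] (s^[d] B) := by
      rw [← Function.iterate_add_apply]
      congr 1
      omega
    have h5 : A = s^[d] B := by
      apply inj_iter_ge (m - d) A (s^[d] B) hA (by omega)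
      rw [← h2, hr, h4]
    rw [h5]
    exact sup_iter d B hB
  have key_le : ∀ A B : Finset (Fin m), A.card ≤ h → B.card ≤ h → B.card ≤ A.card →
      s^[m] A = s^[m] B → B ⊆ A := by
    intro A B hA hB hAB hr
    set d := A.card - B.card with hd
    have hdm : d ≤ m := by have := card_le A; omega
    have h1 : (s^[m - d] A).card = h := by
      apply card_iter (m - d) A (by omega)
      have hm : h + h ≤ m := by omega
      omega
    have h2 : s^[m] A = s^[m - d] A := by
      have hiter := Function.iterate_add_apply s d (m - d) A
      rw [show d + (m - d) = m by omega] at hiter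
      rw [hiter, fix d _ h1]
    have h3 : (s^[d] B).card = A.card := by
      rw [card_iter_lt d B (by omega)]; omega
    have h4 : s^[m] B = s^[m - d] (s^[d] B) := by
      rw [← Function.iterate_add_apply]
      congr 1
      omega
    have h5 : A = s^[d] B := by
      apply inj_iter_le (m - d) A (s^[d] B) hA (by omega)
      rw [← h2, hr, h4]
    rw [h5]
    exact sub_iter d B hB
  refine ⟨fun A => s^[m] A, ?_, ?_⟩
  · intro A
    exact card_iter m A (by have := card_le A; omega) (by omega)
  · intro A B hr0
    have hr : s^[m] A = s^[m] B := hr0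
    rcases le_total A.card h with h1 | h1 <;> rcases le_total B.card h with h2 | h2
    · rcases le_total A.card B.card with h3 | h3
      · exact Or.inl (key_le B A h2 h1 h3 hr.symm)
      · exact Or.inr (key_le A B h1 h2 h3 hr)
    · refine Or.inl ((sub_iter m A h1).trans ?_)
      rw [hr]
      exact sup_iter m B h2
    · refine Or.inr ((sub_iter m B h2).trans ?_)
      rw [← hr]
      exact sup_iter m A h1
    · rcases le_total A.card B.card with h3 | h3
      · exact Or.inl (key_ge A B h1 h2 h3 hr)
      · exact Or.inr (key_ge B A h2 h1 h3 hr.symm)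

/-- Any chain of subsets can be refined by an injective map. -/
lemma perm_of_chain (m : ℕ) (𝒞 : Finset (Finset (Fin m)))
    (hchain : ∀ A B, A ∈ 𝒞 → B ∈ 𝒞 → A ⊆ B ∨ B ⊆ A) :
    ∃ σ : Fin m → Fin m, Function.Injective σ ∧
      ∀ A ∈ 𝒞, ∀ a ∈ A, ∀ b ∉ A, σ a < σ b := by
  classical
  set K := 𝒞.card with hK
  set w : Fin m → ℕ := fun x => (𝒞.filter (fun A => x ∈ A)).card with hw
  set v : Fin m → ℕ := fun x => m * (K - w x) + x.val with hv
  have wle : ∀ x, w x ≤ K := fun x => Finset.card_le_card (Finset.filter_subset _ _)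
  have hvmod : ∀ x : Fin m, v x % m = x.val := by
    intro x
    simp only [hv]
    rw [Nat.mul_add_mod]
    exact Nat.mod_eq_of_lt x.isLt
  have vinj : Function.Injective v := by
    intro x y hxy
    exact Fin.ext (by rw [← hvmod x, ← hvmod y, hxy])
  set σ : Fin m → Fin m := fun x => ⟨(Finset.univ.filter (fun y => v y < v x)).card, by
    have hsub : Finset.univ.filter (fun y => v y < v x) ⊆ Finset.univ.erase x := by
      intro y hy
      rw [Finset.mem_filter] at hy
      rw [Finset.mem_erase]
      exact ⟨fun hyx => absurd hy.2 (by rw [hyx]; exact lt_irrefl _), Finset.mem_univ _⟩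
    have h1 : (Finset.univ.filter (fun y => v y < v x)).card ≤ (Finset.univ.erase x).card :=
      Finset.card_le_card hsub
    rw [Finset.card_erase_of_mem (Finset.mem_univ x), Finset.card_univ, Fintype.card_fin] at h1
    have := x.isLt
    omega⟩ with hσ
  have mono : ∀ x y, v x < v y → σ x < σ y := by
    intro x y hxy
    have hsub : Finset.univ.filter (fun z => v z < v x) ⊆ Finset.univ.filter (fun z => v z < v y) := by
      intro z hz
      rw [Finset.mem_filter] at *
      exact ⟨hz.1, lt_trans hz.2 hxy⟩
    have hx2 : x ∈ Finset.univ.filter (fun z => v z < v y) :=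
      Finset.mem_filter.mpr ⟨Finset.mem_univ _, hxy⟩
    have hx1 : x ∉ Finset.univ.filter (fun z => v z < v x) := by
      rw [Finset.mem_filter]
      exact fun hc => absurd hc.2 (lt_irrefl _)
    show (Finset.univ.filter (fun z => v z < v x)).card < (Finset.univ.filter (fun z => v z < v y)).card
    apply Finset.card_lt_card
    rw [Finset.ssubset_iff_of_subset hsub]
    exact ⟨x, hx2, hx1⟩
  have σinj : Function.Injective σ := by
    intro x y hxy
    by_contra hne
    have hv : v x ≠ v y := fun hc => hne (vinj hc)
    rcases hv.lt_or_gt with hlt | hlt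
    · exact absurd hxy (ne_of_lt (mono x y hlt))
    · exact absurd hxy.symm (ne_of_lt (mono y x hlt))
  refine ⟨σ, σinj, ?_⟩
  intro A hA a ha b hb
  have hsub : 𝒞.filter (fun C => b ∈ C) ⊆ 𝒞.filter (fun C => a ∈ C) := by
    intro C hC
    rw [Finset.mem_filter] at *
    refine ⟨hC.1, ?_⟩
    rcases hchain C A hC.1 hA with h1 | h1
    · exact absurd (h1 hC.2) hb
    · exact h1 ha
  have hwlt : w b < w a := by
    apply Finset.card_lt_card
    rw [Finset.ssubset_iff_of_subset hsub]
    refine ⟨A, Finset.mem_filter.mpr ⟨hA, ha⟩, ?_⟩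
    rw [Finset.mem_filter]
    exact fun hc => hb hc.2
  apply mono
  have h1 : w a ≤ K := wle a
  simp only [hv]
  have h2 : K - w a + 1 ≤ K - w b := by omega
  calc m * (K - w a) + a.val < m * (K - w a) + m := by have := a.isLt; omega
    _ = m * (K - w a + 1) := by ring
    _ ≤ m * (K - w b) := Nat.mul_le_mul_left m h2
    _ ≤ m * (K - w b) + b.val := Nat.le_add_right _ _

theorem stmt_2 (m : ℕ) :
    ∃ O : Finset (Fin m → Fin m),
      (∀ σ ∈ O, Function.Injective σ) ∧
      (∀ A : Finset (Fin m), ∃ σ ∈ O, ∀ a ∈ A, ∀ b ∉ A, σ a < σ b) ∧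
      O.card ≤ Nat.choose m (m / 2) := by
  classical
  obtain ⟨r, hrcard, hrchain⟩ := exists_rep m
  have hperm : ∀ B : Finset (Fin m), ∃ σ : Fin m → Fin m, Function.Injective σ ∧
      ∀ A, r A = B → ∀ a ∈ A, ∀ b ∉ A, σ a < σ b := by
    intro B
    obtain ⟨σ, h1, h2⟩ := perm_of_chain m (Finset.univ.filter (fun A => r A = B))
      (by
        intro A A' hA hA'
        rw [Finset.mem_filter] at hA hA'
        exact hrchain A A' (hA.2.trans hA'.2.symm))
    exact ⟨σ, h1, fun A hA => h2 A (Finset.mem_filter.mpr ⟨Finset.mem_univ _, hA⟩)⟩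
  choose σf hσ1 hσ2 using hperm
  refine ⟨(Finset.univ.powersetCard (m / 2)).image σf, ?_, ?_, ?_⟩
  · intro σ hσ
    rw [Finset.mem_image] at hσ
    obtain ⟨B, _, rfl⟩ := hσ
    exact hσ1 B
  · intro A
    refine ⟨σf (r A), Finset.mem_image_of_mem _ ?_, hσ2 (r A) A rfl⟩
    rw [Finset.mem_powersetCard]
    exact ⟨Finset.subset_univ _, hrcard A⟩
  · calc _ ≤ (Finset.univ.powersetCard (m / 2)).card := Finset.card_image_le
      _ = Nat.choose m (m / 2) := by
        rw [Finset.card_powersetCard, Finset.card_univ, Fintype.card_fin]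
end

section
/- Every complete set of orders on [m] contains at least C(m, ⌊m/2⌋) elements. -/
theorem stmt_3 (m : ℕ) (O : Finset (Fin m → Fin m))
    (hinj : ∀ σ ∈ O, Function.Injective σ)
    (hcomp : ∀ A : Finset (Fin m), ∃ σ ∈ O, ∀ a ∈ A, ∀ b ∉ A, σ a < σ b) :
    Nat.choose m (m / 2) ≤ O.card := by
  classical
  choose f hfO hf using hcomp
  have key : (Finset.univ.powersetCard (m / 2) : Finset (Finset (Fin m))).card ≤ O.card := by
    apply Finset.card_le_card_of_injOn f (fun A _ => hfO A)
    intro A hA B hB hAB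
    by_contra hne
    simp only [Finset.mem_coe, Finset.mem_powersetCard] at hA hB
    have hAsubB : ¬ A ⊆ B := by
      intro h
      exact hne (Finset.eq_of_subset_of_card_le h (hA.2.trans hB.2.symm).ge)
    obtain ⟨a, haA, haB⟩ := Finset.not_subset.mp hAsubB
    have hBsubA : ¬ B ⊆ A := by
      intro h
      exact hne (Finset.eq_of_subset_of_card_le h (hB.2.trans hA.2.symm).ge).symm
    obtain ⟨b, hbB, hbA⟩ := Finset.not_subset.mp hBsubA
    have h1 := hf A a haA b hbA
    have h2 := hf B b hbB a haB
    rw [hAB] at h1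
    exact absurd (h1.trans h2) (lt_irrefl _)
  simpa [Finset.card_powersetCard] using key
end

section
/- For all natural numbers m ≥ 1, the central binomial coefficient satisfies C(2m, m) < 4^m / √(πm). -/
theorem stmt_5 (m : ℕ) (hm : 1 ≤ m) :
    (Nat.choose (2 * m) m : ℝ) < 4 ^ m / Real.sqrt (Real.pi * m) := by
  have hm' : (0:ℝ) < m := by exact_mod_cast hm
  have hpi := Real.pi_pos
  set c : ℝ := (Nat.choose (2*m) m : ℝ) with hc_def
  have hc : 0 < c := by
    have := Nat.choose_pos (show m ≤ 2*m by omega)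
    exact Nat.cast_pos.mpr this
  have hF : (0:ℝ) < (Nat.factorial m : ℝ) := by exact_mod_cast Nat.factorial_pos m
  have hfac : (Nat.factorial (2*m) : ℝ) = c * (Nat.factorial m : ℝ) * (Nat.factorial m : ℝ) := by
    rw [hc_def]
    rw_mod_cast [← Nat.choose_mul_factorial_mul_factorial (show m ≤ 2*m by omega)]
    congr 2
    omega
  have hW := Real.Wallis.le_W m
  rw [Real.Wallis.W_eq_factorial_ratio] at hW
  have h16 : (2:ℝ) ^ (4*m) = 16 ^ m := by
    rw [pow_mul]; norm_num
  rw [hfac, h16] at hW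
  have h2m1 : (0:ℝ) < 2*(m:ℝ)+1 := by positivity
  have h2m2 : (0:ℝ) < 2*(m:ℝ)+2 := by positivity
  have hW' := (le_div_iff₀ (by positivity)).mp hW
  have hexp : ((c * (Nat.factorial m : ℝ) * (Nat.factorial m : ℝ)) ^ 2 * (2 * (m:ℝ) + 1))
      = c^2 * (2*(m:ℝ)+1) * (Nat.factorial m : ℝ)^4 := by ring
  rw [hexp] at hW'
  have hW'' : (2 * (m:ℝ) + 1) / (2 * (m:ℝ) + 2) * (Real.pi / 2) * (c^2 * (2*(m:ℝ)+1)) ≤ 16 ^ m := by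
    have h4 : (0:ℝ) < (Nat.factorial m : ℝ)^4 := by positivity
    rw [← mul_le_mul_iff_of_pos_right h4]
    calc _ = (2 * (m:ℝ) + 1) / (2 * (m:ℝ) + 2) * (Real.pi / 2) *
        (c^2 * (2*(m:ℝ)+1) * (Nat.factorial m : ℝ)^4) := by ring
      _ ≤ _ := hW'
  have key : c^2 * (Real.pi * m) < 16 ^ m := by
    refine lt_of_lt_of_le ?_ hW''
    rw [div_mul_eq_mul_div, div_mul_eq_mul_div, lt_div_iff₀ h2m2]
    nlinarith [mul_pos (mul_pos hc hc) hpi]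
  have hs : (0:ℝ) < Real.sqrt (Real.pi * m) := Real.sqrt_pos.mpr (by positivity)
  rw [lt_div_iff₀ hs]
  have h4 : (0:ℝ) < 4 ^ m := by positivity
  refine lt_of_pow_lt_pow_left₀ 2 h4.le ?_
  rw [mul_pow, Real.sq_sqrt (by positivity)]
  calc c^2 * (Real.pi * m) < 16 ^ m := key
    _ = (4^m)^2 := by rw [← pow_mul, pow_mul']; norm_num
end

section
/- For every natural number n ≥ 2^8 there exists a natural number m ≥ 1 such that 4m·C(2m,m) < n and 2m ≥ log₂(n) − 2·log₂(log₂(n)) − 1. -/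
lemma aux_choose_le_two_pow (m : ℕ) : Nat.choose (2 * m) m ≤ 2 ^ (2 * m) := by
  calc Nat.choose (2 * m) m
      ≤ ∑ i ∈ Finset.range (2 * m + 1), Nat.choose (2 * m) i := by
        exact Finset.single_le_sum (fun i _ => Nat.zero_le _)
          (Finset.mem_range.mpr (by omega))
    _ = 2 ^ (2 * m) := Nat.sum_range_choose (2 * m)

theorem stmt_6 (n : ℕ) (hn : 2 ^ 8 ≤ n) :
    ∃ m : ℕ, 1 ≤ m ∧ 4 * m * Nat.choose (2 * m) m < n ∧
      Real.logb 2 n - 2 * Real.logb 2 (Real.logb 2 n) - 1 ≤ 2 * m := by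
  have h2 : (1 : ℝ) < 2 := one_lt_two
  have hnR : (256 : ℝ) ≤ (n : ℝ) := by exact_mod_cast hn
  have hnpos : (0 : ℝ) < n := by linarith
  set L : ℝ := Real.logb 2 n with hLdef
  have hL8 : (8 : ℝ) ≤ L := by
    have : Real.logb 2 ((2 : ℝ) ^ (8 : ℕ)) ≤ Real.logb 2 n :=
      Real.logb_le_logb_of_le h2 (by norm_num) (by norm_num at hnR ⊢; linarith)
    rwa [Real.logb_pow, Real.logb_self_eq_one (by norm_num : (1:ℝ) < 2),
      mul_one] at this
  have hLpos : (0 : ℝ) < L := by linarith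
  set ℓ : ℝ := Real.logb 2 L with hldef
  have hl3 : (3 : ℝ) ≤ ℓ := by
    have : Real.logb 2 ((2 : ℝ) ^ (3 : ℕ)) ≤ Real.logb 2 L :=
      Real.logb_le_logb_of_le h2 (by norm_num) (by norm_num; linarith)
    rwa [Real.logb_pow, Real.logb_self_eq_one (by norm_num : (1:ℝ) < 2),
      mul_one] at this
  -- analytic bound: 2ℓ ≤ L - 2
  have hlog2 : (0.6931471803 : ℝ) < Real.log 2 := Real.log_two_gt_d9
  have hlogL : Real.log L ≤ Real.log 8 + (L / 8 - 1) := by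
    have h8 : Real.log (L / 8) ≤ L / 8 - 1 :=
      Real.log_le_sub_one_of_pos (by linarith)
    have : Real.log L = Real.log 8 + Real.log (L / 8) := by
      rw [← Real.log_mul (by norm_num) (by positivity)]
      ring_nf
    linarith
  have hlog8 : Real.log 8 = 3 * Real.log 2 := by
    have : (8 : ℝ) = 2 ^ (3 : ℕ) := by norm_num
    rw [this, Real.log_pow]; push_cast; ring
  have hlup : 2 * ℓ ≤ L - 2 := by
    have hℓeq : ℓ = Real.log L / Real.log 2 := rfl
    have hlog2pos : (0 : ℝ) < Real.log 2 := by linarith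
    have hlogLb : Real.log L / Real.log 2 ≤ 3 + (L / 8 - 1) / Real.log 2 := by
      rw [hlog8] at hlogL
      rw [div_le_iff₀ hlog2pos, add_mul, div_mul_cancel₀ _ (ne_of_gt hlog2pos)]
      linarith
    have h18 : (L / 8 - 1) / Real.log 2 ≤ (L / 8 - 1) * 2 := by
      rw [div_le_iff₀ hlog2pos]
      nlinarith
    have : ℓ ≤ L / 4 + 1 := by
      rw [hℓeq]
      calc Real.log L / Real.log 2 ≤ 3 + (L / 8 - 1) / Real.log 2 := hlogLb
        _ ≤ 3 + (L / 8 - 1) * 2 := by linarith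
        _ = L / 4 + 1 := by ring
    linarith
  set x : ℝ := L - 2 * ℓ with hxdef
  have hx2 : (2 : ℝ) ≤ x := by simp only [hxdef]; linarith
  refine ⟨⌈(x - 1) / 2⌉₊, ?_, ?_, ?_⟩
  · rw [Nat.one_le_ceil_iff]; linarith
  · -- main inequality
    set m : ℕ := ⌈(x - 1) / 2⌉₊ with hmdef
    have hmge : (x - 1) / 2 ≤ (m : ℝ) := Nat.le_ceil _
    have hmlt : (m : ℝ) < (x - 1) / 2 + 1 := Nat.ceil_lt_add_one (by linarith)
    have h2m_lt : (2 * m : ℝ) < x + 1 := by linarith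
    have h2m_ge : x - 1 ≤ (2 * m : ℝ) := by linarith
    -- 2^(2ℓ) = L^2
    have h2l : (2 : ℝ) ^ (ℓ : ℝ) = L := Real.rpow_logb (by norm_num) (by norm_num) hLpos
    have h2L : (2 : ℝ) ^ (L : ℝ) = (n : ℝ) := Real.rpow_logb (by norm_num) (by norm_num) hnpos
    have hchoose : ((Nat.choose (2 * m) m : ℕ) : ℝ) ≤ (2 : ℝ) ^ (2 * m : ℕ) := by
      have := aux_choose_le_two_pow m
      exact_mod_cast this
    have hpow_lt : (2 : ℝ) ^ (2 * m : ℕ) < (2 : ℝ) ^ (x + 1 : ℝ) := by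
      rw [← Real.rpow_natCast 2 (2 * m)]
      apply Real.rpow_lt_rpow_left_iff h2 |>.mpr
      push_cast
      push_cast at h2m_lt
      linarith
    have hx1val : (2 : ℝ) ^ (x + 1 : ℝ) * L ^ 2 = 2 * (n : ℝ) := by
      have hL2 : L ^ 2 = (2 : ℝ) ^ (2 * ℓ : ℝ) := by
        rw [← h2l, ← Real.rpow_natCast ((2:ℝ) ^ (ℓ:ℝ)) 2,
          ← Real.rpow_mul (by norm_num)]
        norm_num [mul_comm]
      rw [hL2, ← Real.rpow_add (by norm_num)]
      have hexp : x + 1 + 2 * ℓ = L + 1 := by simp only [hxdef]; ring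
      rw [hexp, Real.rpow_add (by norm_num), h2L, Real.rpow_one]; ring
    have hm_le : (2 * m : ℝ) ≤ L := by
      simp only [hxdef] at h2m_lt
      push_cast at h2m_lt ⊢
      linarith
    have key : (4 * m * Nat.choose (2 * m) m : ℝ) < (n : ℝ) := by
      have hmc : (0 : ℝ) ≤ (m : ℝ) := Nat.cast_nonneg m
      calc (4 * m * Nat.choose (2 * m) m : ℝ)
          ≤ 4 * m * (2 : ℝ) ^ (2 * m : ℕ) := by
            apply mul_le_mul_of_nonneg_left hchoose (by positivity)
        _ = 2 * (2 * m) * (2 : ℝ) ^ (2 * m : ℕ) := by push_cast; ring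
        _ ≤ 2 * L * (2 : ℝ) ^ (2 * m : ℕ) := by
            apply mul_le_mul_of_nonneg_right _ (by positivity)
            push_cast at hm_le ⊢; linarith
        _ < 2 * L * (2 : ℝ) ^ (x + 1 : ℝ) := by
            apply mul_lt_mul_of_pos_left hpow_lt (by linarith)
        _ = (2 / L) * ((2 : ℝ) ^ (x + 1 : ℝ) * L ^ 2) := by
            field_simp
        _ = (2 / L) * (2 * (n : ℝ)) := by rw [hx1val]
        _ = 4 * (n : ℝ) / L := by field_simp; ring
        _ ≤ (n : ℝ) / 2 := by
            rw [div_le_div_iff₀ (by linarith) (by norm_num)]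
            nlinarith
        _ < (n : ℝ) := by linarith
    exact_mod_cast key
  · set m : ℕ := ⌈(x - 1) / 2⌉₊ with hmdef
    have hmge : (x - 1) / 2 ≤ (m : ℝ) := Nat.le_ceil _
    have : x - 1 ≤ 2 * (m : ℝ) := by linarith
    simp only [hxdef] at this
    push_cast
    linarith
end

section
/- For every natural number n such that log₂(n) − 2·log₂(log₂(n)) − 4 ≥ 1, there exists a natural number m ≥ 1 such that 18m·C(2m,m) < n and 2m ≥ log₂(n) − 2·log₂(log₂(n)) − 4. -/
theorem stmt_7 (n : ℕ)
    (hn : 1 ≤ Real.logb 2 n - 2 * Real.logb 2 (Real.logb 2 n) - 4) :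
    ∃ m : ℕ, 1 ≤ m ∧ 18 * m * Nat.choose (2 * m) m < n ∧
      Real.logb 2 n - 2 * Real.logb 2 (Real.logb 2 n) - 4 ≤ 2 * m := by
  set x : ℝ := Real.logb 2 n with hx
  set l : ℝ := Real.logb 2 x with hl
  -- n ≥ 2
  have hn2 : 2 ≤ n := by
    by_contra h
    push_neg at h
    interval_cases n <;> simp_all [Real.logb] <;> norm_num at hn
  have hnpos : (0:ℝ) < n := by positivity
  have h24 : (2:ℝ)^(2:ℝ) = 4 := by
    have := Real.rpow_natCast (2:ℝ) 2
    push_cast at this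
    rw [this]; norm_num
  have hx1 : (1:ℝ) ≤ x := by
    have h2 : Real.logb 2 2 = 1 := Real.logb_self_eq_one one_lt_two
    rw [hx, ← h2]
    exact Real.logb_le_logb_of_le one_lt_two (show (0:ℝ) < 2 by norm_num)
      (by exact_mod_cast hn2)
  have hl0 : 0 ≤ l := Real.logb_nonneg one_lt_two hx1
  have hx5 : (5:ℝ) ≤ x := by linarith
  have hl2 : (2:ℝ) ≤ l := by
    have h4 : Real.logb 2 4 = 2 := by
      rw [← h24, Real.logb_rpow (by norm_num : (0:ℝ) < 2) (by norm_num)]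
    have h44 : Real.logb 2 4 ≤ Real.logb 2 x :=
      Real.logb_le_logb_of_le one_lt_two (show (0:ℝ) < 4 by norm_num)
        (show (4:ℝ) ≤ x by linarith)
    rw [h4] at h44
    rw [hl]; exact h44
  set L : ℝ := x - 2*l - 4 with hL
  have hL1 : 1 ≤ L := hn
  refine ⟨⌈L/2⌉₊, ?_, ?_, ?_⟩
  · exact Nat.one_le_ceil_iff.mpr (by linarith)
  · set m : ℕ := ⌈L/2⌉₊ with hm
    have h2m : (2*m : ℝ) < L + 2 := by
      have := Nat.ceil_lt_add_one (by linarith : (0:ℝ) ≤ L/2)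
      push_cast
      linarith [this]
    have hC : Nat.choose (2*m) m ≤ 4^m := by
      calc Nat.choose (2*m) m ≤ Nat.choose (2*m+1) m :=
            Nat.choose_le_choose m (Nat.le_succ _)
      _ ≤ 4^m := Nat.choose_middle_le_pow m
    have h4 : ((4:ℝ))^m = (2:ℝ)^((2*m : ℝ)) := by
      rw [← h24, ← Real.rpow_natCast ((2:ℝ)^(2:ℝ)) m, ← Real.rpow_mul (by norm_num)]
      all_goals norm_num
    have hpow : (2:ℝ)^((2*m:ℝ)) < (2:ℝ)^(L+2) :=
      (Real.rpow_lt_rpow_left_iff one_lt_two).mpr h2m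
    have h2x : (2:ℝ)^(x:ℝ) = n := Real.rpow_logb (by norm_num) (by norm_num) hnpos
    have h2l : (2:ℝ)^(l:ℝ) = x := Real.rpow_logb (by norm_num) (by norm_num) (by linarith)
    have hx2 : x^2 = (2:ℝ)^(2*l:ℝ) := by
      rw [← h2l, ← Real.rpow_natCast ((2:ℝ)^(l:ℝ)) 2, ← Real.rpow_mul (by norm_num)]
      all_goals norm_num [mul_comm]
    have hval : (2:ℝ)^(L+2) * (4 * x^2) = n := by
      rw [hx2, ← h24, ← Real.rpow_add (by norm_num : (0:ℝ) < 2),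
        ← Real.rpow_add (by norm_num : (0:ℝ) < 2),
        show L + 2 + (2 + 2*l) = x by rw [hL]; ring, h2x]
    have hx2pos : (0:ℝ) < 4 * x^2 := by positivity
    have c2 : ((4:ℝ))^m < (n:ℝ) / (4 * x^2) := by
      rw [lt_div_iff₀ hx2pos, h4, ← hval]
      exact mul_lt_mul_of_pos_right hpow hx2pos
    have hmL : (18 * m : ℝ) ≤ 9 * x := by nlinarith
    have key : (18 * m * Nat.choose (2*m) m : ℝ) < n := by
      have c1 : (Nat.choose (2*m) m : ℝ) ≤ (4:ℝ)^m := by exact_mod_cast hC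
      have c3 : (18 * m * Nat.choose (2*m) m : ℝ) ≤ 18 * m * (4:ℝ)^m := by
        apply mul_le_mul_of_nonneg_left c1; positivity
      have c4 : (18 * m : ℝ) * (4:ℝ)^m ≤ 9 * x * (4:ℝ)^m := by
        apply mul_le_mul_of_nonneg_right hmL; positivity
      have c5 : 9 * x * (4:ℝ)^m < 9 * x * ((n:ℝ) / (4 * x^2)) := by
        apply mul_lt_mul_of_pos_left c2; positivity
      have c6 : 9 * x * ((n:ℝ) / (4 * x^2)) = 9 * n / (4 * x) := by
        field_simp
      have c7 : 9 * (n:ℝ) / (4 * x) < n := by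
        rw [div_lt_iff₀ (by positivity)]
        nlinarith
      linarith
    exact_mod_cast key
  · have := Nat.le_ceil (L/2)
    push_cast
    linarith
end

section
/- Let G be a finite group with |G| ≥ 9rm containing an element g with g ≠ e and g² ≠ e. Then there exist subsets H₁,...,H_r of G, each with |H_l| = m, such that for any two distinct chosen elements h, h' (from different sets H_i, H_j with i ≠ j, or distinct elements of the same H_i), the sets {g⁻²h, g⁻¹h, h, gh, g²h} and {g⁻²h', g⁻¹h', h', gh', g²h'} are disjoint. -/
theorem stmt_14 (G : Type*) [Group G] [Fintype G] (r m : ℕ) (hr : 0 < r) (hm : 0 < m)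
    (hcard : 9 * r * m ≤ Fintype.card G) (g : G) (hg : g ≠ 1) (hg2 : g ^ 2 ≠ 1) :
    ∃ h : Fin r → Fin m → G,
      (∀ l, Function.Injective (h l)) ∧
      (∀ (l l' : Fin r) (i : Fin m) (i' : Fin m), (l, i) ≠ (l', i') →
        ∀ a b : ℤ, -2 ≤ a → a ≤ 2 → -2 ≤ b → b ≤ 2 →
          g ^ a * h l i ≠ g ^ b * h l' i') := by
  classical
  set T : Finset G := (Finset.Icc (-4:ℤ) 4).image (g ^ ·) with hT
  have hTcard : T.card ≤ 9 := by
    calc T.card ≤ (Finset.Icc (-4:ℤ) 4).card := Finset.card_image_le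
    _ = 9 := by simp [Int.card_Icc]
  have key : ∀ n, 9 * n ≤ Fintype.card G →
      ∃ f : Fin n → G, ∀ i j, i ≠ j → ∀ c : ℤ, -4 ≤ c → c ≤ 4 → f j ≠ g ^ c * f i := by
    intro n
    induction n with
    | zero => intro _; exact ⟨fun i => i.elim0, fun i => i.elim0⟩
    | succ k ih =>
      intro hn
      obtain ⟨f, hf⟩ := ih (le_trans (by omega) hn)
      set B : Finset G := Finset.univ.biUnion (fun i : Fin k => T.image (· * f i)) with hB
      have hBcard : B.card < Fintype.card G := by
        calc B.card ≤ ∑ i : Fin k, (T.image (· * f i)).card := Finset.card_biUnion_le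
        _ ≤ ∑ _i : Fin k, 9 :=
            Finset.sum_le_sum (fun i _ => le_trans Finset.card_image_le hTcard)
        _ = 9 * k := by simp [mul_comm]
        _ < 9 * (k+1) := by omega
        _ ≤ _ := hn
      obtain ⟨x, hx⟩ : ∃ x : G, x ∉ B := by
        by_contra hcon
        push_neg at hcon
        have h2 : Fintype.card G ≤ B.card := by
          rw [← Finset.card_univ]
          exact Finset.card_le_card (fun y _ => hcon y)
        omega
      have hmem : ∀ (c : ℤ), -4 ≤ c → c ≤ 4 → ∀ i : Fin k, x ≠ g ^ c * f i := by
        intro c hc1 hc2 i hxe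
        apply hx
        rw [hB]
        simp only [Finset.mem_biUnion, Finset.mem_image, Finset.mem_univ, true_and]
        refine ⟨i, g ^ c, ?_, hxe.symm⟩
        rw [hT]
        exact Finset.mem_image.mpr ⟨c, Finset.mem_Icc.mpr ⟨hc1, hc2⟩, rfl⟩
      refine ⟨Fin.snoc f x, ?_⟩
      intro i j hij c hc1 hc2
      induction i using Fin.lastCases with
      | last =>
        induction j using Fin.lastCases with
        | last => exact absurd rfl hij
        | cast j' =>
          simp only [Fin.snoc_last, Fin.snoc_castSucc]
          intro h
          have hx2 : x = g ^ (-c) * f j' := by rw [h]; group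
          exact hmem (-c) (by omega) (by omega) j' hx2
      | cast i' =>
        induction j using Fin.lastCases with
        | last =>
          simp only [Fin.snoc_last, Fin.snoc_castSucc]
          intro h
          exact hmem c hc1 hc2 i' h
        | cast j' =>
          simp only [Fin.snoc_castSucc]
          intro h
          exact hf i' j' (fun hcc => hij (by rw [hcc])) c hc1 hc2 h
  obtain ⟨f, hf⟩ := key (r * m) (by rw [← mul_assoc]; exact hcard)
  refine ⟨fun l i => f (finProdFinEquiv (l, i)), ?_, ?_⟩
  · intro l i i' hii
    by_contra hne
    have : finProdFinEquiv (l, i) ≠ finProdFinEquiv (l, i') := by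
      intro hh
      exact hne (by simpa using congrArg Prod.snd (finProdFinEquiv.injective hh))
    have h0 := hf _ _ this.symm 0 (by omega) (by omega)
    simp at h0
    exact h0 hii
  · intro l l' i i' hne a b ha1 ha2 hb1 hb2 heq
    have hidx : finProdFinEquiv (l, i) ≠ finProdFinEquiv (l', i') := by
      intro hh; exact hne (finProdFinEquiv.injective hh)
    have h2 : g ^ a * f (finProdFinEquiv (l, i)) = g ^ b * f (finProdFinEquiv (l', i')) := heq
    have hEq : f (finProdFinEquiv (l', i')) = g ^ (a - b) * f (finProdFinEquiv (l, i)) := by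
      calc f (finProdFinEquiv (l', i'))
          = g ^ (-b) * (g ^ b * f (finProdFinEquiv (l', i'))) := by group
        _ = g ^ (-b) * (g ^ a * f (finProdFinEquiv (l, i))) := by rw [h2]
        _ = g ^ (a - b) * f (finProdFinEquiv (l, i)) := by group
    exact hf _ _ hidx (a - b) (by omega) (by omega) hEq
end
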